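/- For each k ≥ 1 and β > 0, the k-th eigenvalue λ_k of the Robin Laplacian on (0,1) satisfies (πk - 2 arctan(πk/β))² < λ_k < (πk - 2 arctan(π(k-1)/β))². -/

import Mathlib

open Real Set

/-- The set of eigenvalues of the Robin Laplacian on (0,1) with parameter `b > 0`,
characterized by the transcendental equation. -/
def RobinEV (b : ℝ) : Set ℝ :=
  {μ : ℝ | 0 < μ ∧
    2 * Real.sqrt μ * Real.cos (Real.sqrt μ)
      + (b - μ / b) * Real.sin (Real.sqrt μ) = 0}

/-!
Writing `λ = s²` with `s > 0`, the eigenvalue equation is equivalent to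
`sin (s + 2 arctan (s / β)) = 0`. The phase `s ↦ s + 2 arctan (s / β)` is an increasing
bijection of `ℝ` vanishing at `0`, so the `k`-th eigenvalue is `s²` for the unique `s` of phase
`πk` (in the notation of the paper, `s = πk - δ_k`). As `0 < arctan (s / β) < π / 2`, this `s` lies in `(π(k-1), πk)`, and inserting these
bounds into `s = πk - 2 arctan (s / β)` gives the estimate.
-/

noncomputable def robinPhase (b s : ℝ) : ℝ := s + 2 * arctan (s / b)

section RobinPhase

variable {b : ℝ}

@[simp]
lemma robinPhase_zero (b : ℝ) : robinPhase b 0 = 0 := by simp [robinPhase]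

lemma robinPhase_strictMono (hb : 0 < b) : StrictMono (robinPhase b) := fun _ _ h =>
  add_lt_add h <| mul_lt_mul_of_pos_left (arctan_strictMono (div_lt_div_of_pos_right h hb)) two_pos

lemma continuous_robinPhase (b : ℝ) : Continuous (robinPhase b) := by
  unfold robinPhase; fun_prop

lemma robinPhase_surjective (b : ℝ) : Function.Surjective (robinPhase b) := by
  refine (continuous_robinPhase b).surjective ?_ ?_
  · exact Filter.tendsto_atTop_add_right_of_le _ (-π) Filter.tendsto_id fun s => by
      linarith [neg_pi_div_two_lt_arctan (s / b)]
  · exact Filter.tendsto_atBot_add_right_of_ge _ π Filter.tendsto_id fun s => by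
      linarith [arctan_lt_pi_div_two (s / b)]

lemma robinPhase_pos_iff (hb : 0 < b) {s : ℝ} : 0 < robinPhase b s ↔ 0 < s := by
  simpa using (robinPhase_strictMono hb).lt_iff_lt (a := 0) (b := s)

lemma sin_robinPhase (hb : b ≠ 0) (s : ℝ) :
    sin (robinPhase b s) = ((b ^ 2 - s ^ 2) * sin s + 2 * b * s * cos s) / (b ^ 2 + s ^ 2) := by
  set x := s / b
  have hsin : sin (arctan x) = x * cos (arctan x) := by rw [sin_arctan, cos_arctan]; ring
  have hsin2 : sin (2 * arctan x) = 2 * x / (1 + x ^ 2) := by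
    rw [sin_two_mul, hsin, mul_assoc, mul_assoc, ← sq, cos_sq_arctan]; ring
  have hcos2 : cos (2 * arctan x) = (1 - x ^ 2) / (1 + x ^ 2) := by
    rw [cos_two_mul, cos_sq_arctan]; field_simp; ring
  rw [robinPhase, sin_add, hsin2, hcos2]
  simp only [x]
  field_simp

lemma sq_mem_robinEV_iff (hb : b ≠ 0) {s : ℝ} (hs : 0 < s) :
    s ^ 2 ∈ RobinEV b ↔ sin (robinPhase b s) = 0 := by
  have hden : b ^ 2 + s ^ 2 ≠ 0 := by positivity
  simp only [RobinEV, mem_ofPred_eq, sqrt_sq hs.le, sin_robinPhase hb, div_eq_zero_iff, hden,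
    or_false, pow_pos hs, true_and]
  constructor <;> intro h
  · field_simp at h; linarith
  · field_simp; linarith

lemma robinPhase_bounds (hb : 0 < b) {s k : ℝ} (hs : 0 < s) (hk : robinPhase b s = π * k) :
    π * k - 2 * arctan (π * k / b) < s ∧ s < π * k - 2 * arctan (π * (k - 1) / b) := by
  unfold robinPhase at hk
  have hpos : 0 < arctan (s / b) := arctan_pos.mpr (div_pos hs hb)
  have hlt := arctan_lt_pi_div_two (s / b)
  constructor
  · have : arctan (s / b) < arctan (π * k / b) := arctan_strictMono (by gcongr; linarith)
    linarith
  · have : arctan (π * (k - 1) / b) < arctan (s / b) := arctan_strictMono (by gcongr; linarith)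
    linarith

end RobinPhase

noncomputable def robinRoot {b : ℝ} (hb : 0 < b) (k : ℕ) : ℝ :=
  (StrictMono.orderIsoOfSurjective _ (robinPhase_strictMono hb) (robinPhase_surjective b)).symm
    (π * k)

section RobinRoot

variable {b : ℝ} (hb : 0 < b)

lemma robinPhase_robinRoot (k : ℕ) : robinPhase b (robinRoot hb k) = π * k :=
  StrictMono.orderIsoOfSurjective_self_symm_apply _ _ _ _

lemma robinRoot_eq_iff {s : ℝ} {k : ℕ} : robinRoot hb k = s ↔ robinPhase b s = π * k := by
  rw [← robinPhase_robinRoot hb k, (robinPhase_strictMono hb).injective.eq_iff, eq_comm]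

lemma robinRoot_pos {k : ℕ} (hk : 0 < k) : 0 < robinRoot hb k := by
  rw [← robinPhase_pos_iff hb, robinPhase_robinRoot]
  exact mul_pos pi_pos (Nat.cast_pos.mpr hk)

lemma robinRoot_strictMono : StrictMono (robinRoot hb) := fun m n h => by
  rw [← (robinPhase_strictMono hb).lt_iff_lt, robinPhase_robinRoot, robinPhase_robinRoot]
  exact mul_lt_mul_of_pos_left (Nat.cast_lt.mpr h) pi_pos

lemma strictMono_robinRoot_succ_sq : StrictMono fun n : ℕ => robinRoot hb (n + 1) ^ 2 :=
  fun m _ h => pow_lt_pow_left₀ (robinRoot_strictMono hb (Nat.succ_lt_succ h))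
    (robinRoot_pos hb m.succ_pos).le two_ne_zero

lemma robinEV_eq_range : RobinEV b = range fun n : ℕ => robinRoot hb (n + 1) ^ 2 := by
  ext μ
  constructor
  · intro hμ
    obtain ⟨s, hs, rfl⟩ : ∃ s, 0 < s ∧ s ^ 2 = μ := ⟨√μ, sqrt_pos.mpr hμ.1, sq_sqrt hμ.1.le⟩
    obtain ⟨n, hn⟩ := sin_eq_zero_iff.mp ((sq_mem_robinEV_iff hb.ne' hs).mp hμ)
    have hn_pos : 0 < n := by
      have := (robinPhase_pos_iff hb).mpr hs
      rw [← hn] at this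
      exact_mod_cast pos_of_mul_pos_left this pi_pos.le
    obtain ⟨m, rfl⟩ : ∃ m : ℕ, n = m + 1 := ⟨n.toNat - 1, by omega⟩
    refine ⟨m, ?_⟩
    dsimp only
    rw [(robinRoot_eq_iff hb).mpr (by rw [← hn]; push_cast; ring)]
  · rintro ⟨n, rfl⟩
    rw [sq_mem_robinEV_iff hb.ne' (robinRoot_pos hb n.succ_pos), robinPhase_robinRoot, mul_comm]
    exact sin_nat_mul_pi _

end RobinRoot

theorem robin_eigenvalue_arctan_bounds
    (β : ℝ) (hβ : 0 < β) (lamseq : ℕ → ℝ)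
    (hmono : StrictMono lamseq)
    (hmem : ∀ n, lamseq n ∈ RobinEV β)
    (hsurj : ∀ μ ∈ RobinEV β, ∃ n, lamseq n = μ)
    (k : ℕ) (hk : 1 ≤ k) :
    (Real.pi * k - 2 * Real.arctan (Real.pi * k / β)) ^ 2 < lamseq (k - 1) ∧
      lamseq (k - 1) <
        (Real.pi * k - 2 * Real.arctan (Real.pi * ((k : ℝ) - 1) / β)) ^ 2 := by
  have hrange : range lamseq = range fun n : ℕ => robinRoot hβ (n + 1) ^ 2 := by
    rw [← robinEV_eq_range hβ]
    exact Subset.antisymm (range_subset_iff.mpr hmem) hsurj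
  have hlam : lamseq (k - 1) = robinRoot hβ k ^ 2 := by
    rw [(hmono.range_inj (strictMono_robinRoot_succ_sq hβ)).mp hrange]
    dsimp only
    rw [Nat.sub_add_cancel hk]
  have hs := robinRoot_pos hβ hk
  obtain ⟨hlow, hupp⟩ := robinPhase_bounds hβ hs (robinPhase_robinRoot hβ k)
  have hlow_nonneg : 0 ≤ π * k - 2 * arctan (π * k / β) := by
    have : (1 : ℝ) ≤ k := Nat.one_le_cast.mpr hk
    nlinarith [arctan_lt_pi_div_two (π * k / β), pi_pos]
  rw [hlam]
  exact ⟨pow_lt_pow_left₀ hlow hlow_nonneg two_ne_zero, pow_lt_pow_left₀ hupp hs.le two_ne_zero⟩
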